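/- arXiv:1105.0507 — 4 statements merged into one kernel-verified Lean document; each statement's English description precedes it below -/
import Mathlib

section
/- Let Γ be an (n+1)-coloured graph and R = (e,f) a ρ_n-pair of Γ. If Γ₁ is obtained from Γ by a switching of R, then Γ₁ has at most one more connected component than Γ. -/
open Set

/-- An `(n+1)`-coloured graph on vertex set `V`: for each colour `c ∈ {0,…,n}` a
fixed-point-free involution pairing the endpoints of the `c`-coloured edges. -/
structure PCG (n : ℕ) (V : Type) where
  inv : Fin (n + 1) → V → V
  involutive : ∀ c, Function.Involutive (inv c)
  fixedfree : ∀ c v, inv c v ≠ v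

namespace PCG

variable {n : ℕ} {V : Type}

/-- One step along an edge whose colour lies in `B`. -/
def step (Γ : PCG n V) (B : Set (Fin (n + 1))) (a b : V) : Prop :=
  ∃ c ∈ B, Γ.inv c a = b

/-- Reachability in the subgraph of edges whose colours lie in `B`. -/
def reach (Γ : PCG n V) (B : Set (Fin (n + 1))) : V → V → Prop :=
  Relation.ReflTransGen (Γ.step B)

/-- `x` and `y` lie on the same `{c,i}`-bicoloured cycle. -/
def sameCycle (Γ : PCG n V) (c i : Fin (n + 1)) (x y : V) : Prop :=
  Γ.reach {c, i} x y

/-- Number of connected components of the subgraph of colours in `B`. -/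
noncomputable def numComp (Γ : PCG n V) (B : Set (Fin (n + 1))) : ℕ :=
  Nat.card (Quot (Γ.reach B))

/-- Number of connected components of the subgraph of colours in `B`,
restricted to the vertex set `S`. -/
noncomputable def numCompOn (Γ : PCG n V) (B : Set (Fin (n + 1))) (S : Set V) : ℕ :=
  Nat.card (Quot (Relation.ReflTransGen
    (fun a b : S => ∃ c ∈ B, Γ.inv c (a : V) = (b : V))))

/-- The `c`-coloured edges `{x, Γ.inv c x}` and `{y, Γ.inv c y}` are distinct. -/
def EdgesNe (Γ : PCG n V) (c : Fin (n + 1)) (x y : V) : Prop :=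
  y ≠ x ∧ y ≠ Γ.inv c x

/-- A `ρₙ`-pair involving colour `c`, represented by endpoints `x` of `e` and `y` of `f`. -/
def IsRhoN (Γ : PCG n V) (c : Fin (n + 1)) (x y : V) : Prop :=
  Γ.EdgesNe c x y ∧ ∀ i, i ≠ c → Γ.sameCycle c i x y

/-- A `ρ_{n-1}`-pair involving colour `c` and not involving colour `d`. -/
def IsRhoN1 (Γ : PCG n V) (c d : Fin (n + 1)) (x y : V) : Prop :=
  Γ.EdgesNe c x y ∧ d ≠ c ∧ ¬Γ.sameCycle c d x y ∧
    ∀ j, j ≠ c → j ≠ d → Γ.sameCycle c j x y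

/-- `Γ` is rigid: it contains no `ρ`-pairs. -/
def Rigid (Γ : PCG n V) : Prop :=
  (¬∃ c x y, Γ.IsRhoN c x y) ∧ ¬∃ c d x y, Γ.IsRhoN1 c d x y

/-- A `ρ`-pair of maximal type of the `î`-residue containing it: two `c`-coloured
edges (`c ≠ i`) of the same `î`-residue lying on a common `{c,j}`-cycle for every
colour `j` of the residue different from `c`. -/
def IsRhoSubMax (Γ : PCG n V) (i c : Fin (n + 1)) (x y : V) : Prop :=
  c ≠ i ∧ Γ.EdgesNe c x y ∧ Γ.reach {i}ᶜ x y ∧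
    ∀ j, j ≠ c → j ≠ i → Γ.sameCycle c j x y

/-- `Γ'` is obtained from `Γ` by a switching of the pair of `c`-coloured edges at `x` and `y`:
delete the two edges and reconnect the four endpoints in one of the two other ways. -/
def IsSwitch (Γ Γ' : PCG n V) (c : Fin (n + 1)) (x y : V) : Prop :=
  (∀ i, i ≠ c → Γ'.inv i = Γ.inv i) ∧
  (∀ v, v ≠ x → v ≠ y → v ≠ Γ.inv c x → v ≠ Γ.inv c y → Γ'.inv c v = Γ.inv c v) ∧
  ((Γ'.inv c x = y ∧ Γ'.inv c (Γ.inv c x) = Γ.inv c y) ∨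
    (Γ'.inv c x = Γ.inv c y ∧ Γ'.inv c (Γ.inv c x) = y))

/-- The standard (orientation-coherent) switching of a `ρₙ`-pair: with respect to any
proper 2-colouring of any `{c,i}`-bicoloured subgraph, `x = e(0)` gets joined to a vertex
in the opposite class, i.e. to the head `f(1)` of `f`. -/
def IsStdSwitch (Γ Γ' : PCG n V) (c : Fin (n + 1)) (x y : V) : Prop :=
  Γ.IsSwitch Γ' c x y ∧
  ∀ i, i ≠ c → ∀ b : V → Bool, (∀ w, b (Γ.inv c w) ≠ b w) →
    (∀ w, b (Γ.inv i w) ≠ b w) → b (Γ'.inv c x) ≠ b x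

/-- The standard switching of a `ρ_{n-1}`-pair not involving colour `d`: with respect to
any bipartition of the `d̂`-residues, `x = e(0)` gets joined to a vertex of the opposite
class. -/
def IsStdSwitchN1 (Γ Γ' : PCG n V) (c d : Fin (n + 1)) (x y : V) : Prop :=
  Γ.IsSwitch Γ' c x y ∧
  ∀ b : V → Bool, (∀ j, j ≠ d → ∀ w, b (Γ.inv j w) ≠ b w) → b (Γ'.inv c x) ≠ b x

/-- `Γ` is bipartite. -/
def Bipartite (Γ : PCG n V) : Prop :=
  ∃ b : V → Bool, ∀ c v, b (Γ.inv c v) ≠ b v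

/-- `S` is a union of connected components splitting `Γ` into exactly two
connected pieces `S` and `Sᶜ`. -/
def SplitsTwo (Γ : PCG n V) (S : Set V) : Prop :=
  S.Nonempty ∧ Sᶜ.Nonempty ∧ (∀ v ∈ S, ∀ c, Γ.inv c v ∈ S) ∧
  (∀ u ∈ S, ∀ v ∈ S, Γ.reach Set.univ u v) ∧
  (∀ u ∈ Sᶜ, ∀ v ∈ Sᶜ, Γ.reach Set.univ u v)

/-- The geometric realization `|K(Γ)|` of the part of `Γ` spanned by the vertex set `S`:
one `n`-simplex per vertex, glued along the faces opposite to `c` according to the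
`c`-coloured edges. -/
abbrev RealSp (Γ : PCG n V) (S : Set V) : Type :=
  Quot (fun a b : (Σ _ : S, ↥(stdSimplex ℝ (Fin (n + 1)))) =>
    ∃ c : Fin (n + 1), (b.1 : V) = Γ.inv c a.1 ∧ b.2 = a.2 ∧ (a.2 : Fin (n + 1) → ℝ) c = 0)

/-- The geometric realization of the part of the `î`-residue subgraph spanned by `S`:
one `(n-1)`-simplex (with vertices labelled by the colours `≠ i`) per vertex. -/
abbrev ResRealSp (Γ : PCG n V) (i : Fin (n + 1)) (S : Set V) : Type :=
  Quot (fun a b : (Σ _ : S, ↥(stdSimplex ℝ {j : Fin (n + 1) // j ≠ i})) =>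
    ∃ c : {j : Fin (n + 1) // j ≠ i},
      (b.1 : V) = Γ.inv c a.1 ∧ b.2 = a.2 ∧ (a.2 : {j : Fin (n + 1) // j ≠ i} → ℝ) c = 0)

/-- `Γ` is a gem of the space `X`, i.e. `|K(Γ)| ≅ X`. -/
def IsGemOf (Γ : PCG n V) (X : Type) [TopologicalSpace X] : Prop :=
  Nonempty (Γ.RealSp Set.univ ≃ₜ X)

/-- `Γ` is a crystallization of `X`: a gem of `X` all of whose `ĉ`-residue subgraphs
are connected. -/
def IsCrystallization (Γ : PCG n V) (X : Type) [TopologicalSpace X] : Prop :=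
  Γ.IsGemOf X ∧ ∀ c : Fin (n + 1), ∀ u v : V, Γ.reach {c}ᶜ u v

end PCG

/-- The `m`-dimensional sphere. -/
abbrev sphereType (m : ℕ) : Type :=
  ↥(Metric.sphere (0 : EuclideanSpace ℝ (Fin (m + 1))) 1)

/-- `Z` is a closed topological `m`-manifold (possibly disconnected). -/
def IsClosedManifoldN (m : ℕ) (Z : Type) [TopologicalSpace Z] : Prop :=
  T2Space Z ∧ CompactSpace Z ∧
    ∀ z : Z, ∃ U : Set Z, z ∈ U ∧ IsOpen U ∧ Nonempty (U ≃ₜ EuclideanSpace ℝ (Fin m))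

/-- `X` is a connected sum of `X₁` and `X₂` (`m`-dimensional): `X` decomposes into two
pieces, homeomorphic to the complements of open balls in `X₁` and `X₂`, glued along a
sphere. -/
def IsConnSum (m : ℕ) (X X₁ X₂ : Type) [TopologicalSpace X]
    [TopologicalSpace X₁] [TopologicalSpace X₂] : Prop :=
  ∃ (C₁ : Set X₁) (C₂ : Set X₂) (A₁ A₂ : Set X),
    Nonempty (C₁ ≃ₜ (Metric.closedBall (0 : EuclideanSpace ℝ (Fin m)) 1 :
      Set (EuclideanSpace ℝ (Fin m)))) ∧
    Nonempty (C₂ ≃ₜ (Metric.closedBall (0 : EuclideanSpace ℝ (Fin m)) 1 :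
      Set (EuclideanSpace ℝ (Fin m)))) ∧
    A₁ ∪ A₂ = Set.univ ∧
    Nonempty (↥(A₁ ∩ A₂) ≃ₜ (Metric.sphere (0 : EuclideanSpace ℝ (Fin m)) 1 :
      Set (EuclideanSpace ℝ (Fin m)))) ∧
    Nonempty (A₁ ≃ₜ ((interior C₁)ᶜ : Set X₁)) ∧
    Nonempty (A₂ ≃ₜ ((interior C₂)ᶜ : Set X₂))

/-- The twisted `m`-sphere bundle over `S¹`: the mapping torus of a reflection of `Sᵐ`. -/
abbrev TwistedBundle (m : ℕ) : Type :=
  Quot (fun a b : sphereType m × ℝ =>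
    b.2 = a.2 + 1 ∧ (b.1 : EuclideanSpace ℝ (Fin (m + 1))) =
      fun i => if i = 0 then -((a.1 : EuclideanSpace ℝ (Fin (m + 1))) i)
               else (a.1 : EuclideanSpace ℝ (Fin (m + 1))) i)

/-- A handle of dimension `n`: `S^{n-1} × S¹` or the twisted `S^{n-1}`-bundle over `S¹`. -/
def IsHandleDim (n : ℕ) (H : Type) [TopologicalSpace H] : Prop :=
  Nonempty (H ≃ₜ sphereType (n - 1) × sphereType 1) ∨ Nonempty (H ≃ₜ TwistedBundle (n - 1))

/-- `X` is handle-free: it is not a connected sum of anything with a handle. -/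
def HandleFree (n : ℕ) (X : Type) [TopologicalSpace X] : Prop :=
  ¬∃ (Y H : Type) (_ : TopologicalSpace Y) (_ : TopologicalSpace H),
    IsHandleDim n H ∧ IsConnSum n X Y H

/-!
Put back the deleted edge `{x, x'}` into `Γ₁` (here `x' = Γ.inv c x`, `y' = Γ.inv c y`). In the
resulting graph `x ~ x'` by fiat and `y ~ y'` through the two new edges, so every edge of `Γ` joins
two vertices of one component: its components are unions of components of `Γ`, hence at most as
many. Adding a single edge to `Γ₁` merges at most two components, which costs at most one.
-/

open Relation

section Quot

variable {α : Type*}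

theorem card_quot_le_of_forall_eqvGen {r s : α → α → Prop} [Finite (Quot r)]
    (h : ∀ a b, r a b → EqvGen s a b) : Nat.card (Quot s) ≤ Nat.card (Quot r) :=
  Nat.card_le_card_of_surjective
    (Quot.lift (Quot.mk s) fun a b hab => Quot.eqvGen_sound (h a b hab))
    (Quot.ind fun a => ⟨Quot.mk r a, rfl⟩)

theorem card_quot_le_card_quot_or_pair_add_one (r : α → α → Prop) (a b : α)
    [Finite (Quot fun p q => r p q ∨ p = a ∧ q = b)] :
    Nat.card (Quot r) ≤ Nat.card (Quot fun p q => r p q ∨ p = a ∧ q = b) + 1 := by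
  classical
  set r' : α → α → Prop := fun p q => r p q ∨ p = a ∧ q = b
  let π : Quot r → Quot r' := Quot.map id fun _ _ => Or.inl
  -- Folding the class of `b` onto that of `a` gives a left inverse of `π` away from `[b]`.
  let fold : Quot r → Quot r := fun q => if q = Quot.mk r b then Quot.mk r a else q
  let unfold : Quot r' → Quot r := Quot.lift (fun p => fold (Quot.mk r p)) <| by
    rintro p q (hpq | ⟨rfl, rfl⟩)
    · rw [Quot.sound hpq]
    · simp only [fold]
      split_ifs with h <;> simp [h]
  have unfold_π : ∀ q, q ≠ Quot.mk r b → unfold (π q) = q :=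
    Quot.ind fun p hp => if_neg hp
  let G : Quot r → Option (Quot r') := fun q => if q = Quot.mk r b then none else some (π q)
  have hG : Function.Injective G := by
    intro q₁ q₂ h
    by_cases h₁ : q₁ = Quot.mk r b <;> by_cases h₂ : q₂ = Quot.mk r b <;>
      simp only [G, h₁, h₂, if_true, if_false, reduceCtorEq, Option.some.injEq] at h
    · rw [h₁, h₂]
    · rw [← unfold_π q₁ h₁, ← unfold_π q₂ h₂, h]
  calc Nat.card (Quot r) ≤ Nat.card (Option (Quot r')) := Nat.card_le_card_of_injective G hG
    _ = Nat.card (Quot r') + 1 := Finite.card_option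

end Quot

namespace PCG

variable {n : ℕ} {V : Type}

theorem reach_inv (Γ : PCG n V) {B : Set (Fin (n + 1))} {i : Fin (n + 1)} (hi : i ∈ B) (v : V) :
    Γ.reach B v (Γ.inv i v) :=
  ReflTransGen.single ⟨i, hi, rfl⟩

section Switch

variable {Γ Γ₁ : PCG n V} {c : Fin (n + 1)} {x y : V}

theorem IsSwitch.eqvGen_inv (hS : Γ.IsSwitch Γ₁ c x y) (i : Fin (n + 1)) (a : V) :
    EqvGen (fun p q => Γ₁.reach univ p q ∨ p = x ∧ q = Γ.inv c x) a (Γ.inv i a) := by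
  obtain ⟨hcol, hfar, hnew⟩ := hS
  set t : V → V → Prop := fun p q => Γ₁.reach univ p q ∨ p = x ∧ q = Γ.inv c x
  have edge₁ : ∀ j v, EqvGen t v (Γ₁.inv j v) := fun j v =>
    EqvGen.rel _ _ (Or.inl (Γ₁.reach_inv (mem_univ j) v))
  have edge₁_symm : ∀ v w, Γ₁.inv c v = w → EqvGen t w v := fun v w h =>
    EqvGen.symm _ _ (h ▸ edge₁ c v)
  have hx : EqvGen t x (Γ.inv c x) := EqvGen.rel _ _ (Or.inr ⟨rfl, rfl⟩)
  have hy : EqvGen t y (Γ.inv c y) := by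
    rcases hnew with ⟨h, h'⟩ | ⟨h, h'⟩
    · exact ((edge₁_symm x y h).trans _ _ _ hx).trans _ _ _ (h' ▸ edge₁ c _)
    · exact ((edge₁_symm _ y h').trans _ _ _ (EqvGen.symm _ _ hx)).trans _ _ _
        (h ▸ edge₁ c x)
  have back : ∀ z, EqvGen t z (Γ.inv c z) → EqvGen t (Γ.inv c z) (Γ.inv c (Γ.inv c z)) :=
    fun z h => (Γ.involutive c z).symm ▸ EqvGen.symm _ _ h
  by_cases hic : i = c
  · subst hic
    by_cases hax : a = x; · exact hax ▸ hx
    by_cases hay : a = y; · exact hay ▸ hy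
    by_cases hax' : a = Γ.inv i x; · exact hax' ▸ back x hx
    by_cases hay' : a = Γ.inv i y; · exact hay' ▸ back y hy
    exact hfar a hax hay hax' hay' ▸ edge₁ i a
  · exact hcol i hic ▸ edge₁ i a

theorem IsSwitch.eqvGen_of_reach (hS : Γ.IsSwitch Γ₁ c x y) {u v : V}
    (h : Γ.reach univ u v) :
    EqvGen (fun p q => Γ₁.reach univ p q ∨ p = x ∧ q = Γ.inv c x) u v := by
  induction h with
  | refl => exact EqvGen.refl _
  | tail _ hstep ih =>
    obtain ⟨i, -, rfl⟩ := hstep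
    exact ih.trans _ _ _ (hS.eqvGen_inv i _)

end Switch

end PCG

theorem stmt2_general {n : ℕ} {V : Type} [Fintype V] (Γ Γ₁ : PCG n V) (c : Fin (n + 1)) (x y : V)
    (hS : Γ.IsSwitch Γ₁ c x y) :
    Γ₁.numComp Set.univ ≤ Γ.numComp Set.univ + 1 :=
  calc Γ₁.numComp univ
      ≤ Nat.card (Quot fun p q => Γ₁.reach univ p q ∨ p = x ∧ q = Γ.inv c x) + 1 :=
        card_quot_le_card_quot_or_pair_add_one _ _ _
    _ ≤ Γ.numComp univ + 1 :=
        Nat.add_le_add_right (card_quot_le_of_forall_eqvGen fun _ _ => hS.eqvGen_of_reach) 1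

/-- Switching a `ρₙ`-pair produces at most one more connected component. -/
theorem stmt2 {n : ℕ} {V : Type} [Fintype V] (Γ Γ₁ : PCG n V) (c : Fin (n + 1)) (x y : V)
    (hR : Γ.IsRhoN c x y) (hS : Γ.IsSwitch Γ₁ c x y) :
    Γ₁.numComp Set.univ ≤ Γ.numComp Set.univ + 1 :=
  stmt2_general Γ Γ₁ c x y hS
end

section
/- Let n ≥ 3, and let Γ be an (n+1)-coloured graph all of whose residues (components of the subgraphs obtained by deleting one colour class) are bipartite. Let R = (e,f) be a ρ_n-pair involving colour c, orient e arbitrarily, and for each colour i ≠ c let the orientation of f be the one induced by coherently orienting the bicoloured cycle Γ_{c,i}(e). Then the induced orientation of f is independent of the choice of the colour i ≠ c. -/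
open Set

/-! Pick a colour `k ∉ {c, i, j}` (possible as `n ≥ 3`). A 2-colouring of the `k̂`-residues is
proper on both the `{c,i}`- and the `{c,j}`-coloured subgraphs, so both induced tails lie in the
class of `x`; the two endpoints of `f` lie in opposite classes, hence the tails coincide. -/

theorem exists_ne_ne_ne_of_three_lt_card {α : Type*} [Fintype α] [DecidableEq α]
    (h : 3 < Fintype.card α) (a b c : α) : ∃ k, k ≠ a ∧ k ≠ b ∧ k ≠ c := by
  have hcard : ({a, b, c} : Finset α).card < (Finset.univ : Finset α).card :=
    Finset.card_le_three.trans_lt h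
  obtain ⟨k, -, hk⟩ := Finset.exists_mem_notMem_of_card_lt_card hcard
  simp only [Finset.mem_insert, Finset.mem_singleton, not_or] at hk
  exact ⟨k, hk⟩

namespace PCG

variable {n : ℕ} {V : Type}

theorem eq_of_mem_edge_of_colour_eq (Γ : PCG n V) {c : Fin (n + 1)} {b : V → Bool}
    (hb : ∀ w, b (Γ.inv c w) ≠ b w) {y t t' : V} (ht : t = y ∨ t = Γ.inv c y)
    (ht' : t' = y ∨ t' = Γ.inv c y) (h : b t = b t') : t = t' := by
  rcases ht with rfl | rfl <;> rcases ht' with rfl | rfl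
  · rfl
  · exact absurd h.symm (hb t)
  · exact absurd h (hb t')
  · rfl

end PCG

theorem stmt4_general {n : ℕ} {V : Type} (hn : 3 ≤ n) (Γ : PCG n V)
    (hres : ∀ k : Fin (n + 1), ∃ b : V → Bool, ∀ j, j ≠ k → ∀ w, b (Γ.inv j w) ≠ b w)
    (c : Fin (n + 1)) (x y : V) :
    ∀ i j, i ≠ c → j ≠ c → ∀ t t' : V,
      ((t = y ∨ t = Γ.inv c y) ∧ ∀ b : V → Bool, (∀ w, b (Γ.inv c w) ≠ b w) →
        (∀ w, b (Γ.inv i w) ≠ b w) → b t = b x) →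
      ((t' = y ∨ t' = Γ.inv c y) ∧ ∀ b : V → Bool, (∀ w, b (Γ.inv c w) ≠ b w) →
        (∀ w, b (Γ.inv j w) ≠ b w) → b t' = b x) →
      t = t' := by
  intro i j _ _ t t' ht ht'
  obtain ⟨k, hki, hkj, hkc⟩ :=
    exists_ne_ne_ne_of_three_lt_card (by simp only [Fintype.card_fin]; omega) i j c
  obtain ⟨b, hb⟩ := hres k
  have hbc := hb c hkc.symm
  refine Γ.eq_of_mem_edge_of_colour_eq hbc ht.1 ht'.1 ?_
  rw [ht.2 b hbc (hb i hki.symm), ht'.2 b hbc (hb j hkj.symm)]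

/-- Let `n ≥ 3` and let `Γ` be an `(n+1)`-coloured graph all of whose
residues are bipartite.  Let `R = (e,f)` be a `ρₙ`-pair involving colour `c`, with
`e = {x, Γ.inv c x}` oriented from its tail `x = e(0)`, and `f = {y, Γ.inv c y}`.
For a colour `i ≠ c`, the tail of `f` induced by coherently orienting the bicoloured
cycle `Γ_{c,i}(e)` is the endpoint `t` of `f` lying, with respect to every proper
2-colouring of the `{c,i}`-coloured subgraph, in the same class as `x`.  Then this
induced tail is independent of the choice of the colour `i ≠ c`. -/
theorem stmt4 {n : ℕ} {V : Type} [Fintype V] (hn : 3 ≤ n) (Γ : PCG n V)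
    (hres : ∀ k : Fin (n + 1), ∃ b : V → Bool, ∀ j, j ≠ k → ∀ w, b (Γ.inv j w) ≠ b w)
    (c : Fin (n + 1)) (x y : V) (hR : Γ.IsRhoN c x y) :
    ∀ i j, i ≠ c → j ≠ c → ∀ t t' : V,
      ((t = y ∨ t = Γ.inv c y) ∧ ∀ b : V → Bool, (∀ w, b (Γ.inv c w) ≠ b w) →
        (∀ w, b (Γ.inv i w) ≠ b w) → b t = b x) →
      ((t' = y ∨ t' = Γ.inv c y) ∧ ∀ b : V → Bool, (∀ w, b (Γ.inv c w) ≠ b w) →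
        (∀ w, b (Γ.inv j w) ≠ b w) → b t' = b x) →
      t = t' :=
  stmt4_general hn Γ hres c x y
end

section
/- An (n+1)-coloured graph Γ, n ≥ 3, is rigid (contains no ρ-pairs) if and only if for every colour i ∈ {0,...,n}, no î-residue of Γ contains a ρ_{n−1}-pair. -/
open Set

/-! A `ρ`-pair of maximal type of an `î`-residue is a `ρₙ`-pair of `Γ` if its edges also share
a `{c,i}`-cycle, and a `ρ_{n-1}`-pair avoiding `i` otherwise. Conversely, the two edges of a
`ρ_{n-1}`-pair avoiding `d` (of a `ρₙ`-pair) share a `{c,j}`-cycle for some `j ∉ {c, i}`, where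
`i = d` (any `i ≠ c`); that cycle lies in a single `î`-residue. Such `i` and `j` exist as soon
as there are three colours. -/

namespace PCG

variable {n : ℕ} {V : Type} {Γ : PCG n V}

lemma reach_mono {A B : Set (Fin (n + 1))} (h : A ⊆ B) {x y : V} (r : Γ.reach A x y) :
    Γ.reach B x y :=
  Relation.ReflTransGen.mono (fun _ _ ⟨c, hc, he⟩ => ⟨c, h hc, he⟩) x y r

lemma reach_compl_of_sameCycle {c i j : Fin (n + 1)} (hci : c ≠ i) (hji : j ≠ i) {x y : V}
    (h : Γ.sameCycle c j x y) : Γ.reach {i}ᶜ x y :=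
  reach_mono (by rintro a (rfl | rfl) <;> assumption) h

lemma isRhoSubMax_of_isRhoN1 {c d : Fin (n + 1)} {x y : V} (hn : 2 ≤ n)
    (h : Γ.IsRhoN1 c d x y) : Γ.IsRhoSubMax d c x y := by
  obtain ⟨hE, hdc, -, hall⟩ := h
  obtain ⟨j, hjc, hjd⟩ := Fin.exists_ne_and_ne_of_two_lt c d (by omega)
  exact ⟨hdc.symm, hE, reach_compl_of_sameCycle hdc.symm hjd (hall j hjc hjd), hall⟩

lemma exists_isRhoSubMax_of_isRhoN {c : Fin (n + 1)} {x y : V} (hn : 2 ≤ n)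
    (h : Γ.IsRhoN c x y) : ∃ i, Γ.IsRhoSubMax i c x y := by
  obtain ⟨hE, hall⟩ := h
  obtain ⟨i, hic, -⟩ := Fin.exists_ne_and_ne_of_two_lt c c (by omega)
  obtain ⟨j, hjc, hji⟩ := Fin.exists_ne_and_ne_of_two_lt c i (by omega)
  exact ⟨i, hic.symm, hE, reach_compl_of_sameCycle hic.symm hji (hall j hjc),
    fun j hjc _ => hall j hjc⟩

lemma IsRhoSubMax.isRhoN_or_isRhoN1 {i c : Fin (n + 1)} {x y : V}
    (h : Γ.IsRhoSubMax i c x y) : Γ.IsRhoN c x y ∨ Γ.IsRhoN1 c i x y := by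
  obtain ⟨hci, hE, -, hall⟩ := h
  by_cases hs : Γ.sameCycle c i x y
  · refine .inl ⟨hE, fun j hjc => ?_⟩
    rcases eq_or_ne j i with rfl | hji
    · exact hs
    · exact hall j hjc hji
  · exact .inr ⟨hE, hci.symm, hs, hall⟩

end PCG

theorem stmt13_general {n : ℕ} {V : Type} (hn : 3 ≤ n) (Γ : PCG n V) :
    Γ.Rigid ↔ ∀ (i c : Fin (n + 1)) (x y : V), ¬Γ.IsRhoSubMax i c x y := by
  constructor
  · rintro ⟨hN, hN1⟩ i c x y h
    rcases h.isRhoN_or_isRhoN1 with hρ | hρ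
    · exact hN ⟨c, x, y, hρ⟩
    · exact hN1 ⟨c, i, x, y, hρ⟩
  · intro h
    refine ⟨fun ⟨c, x, y, hρ⟩ => ?_, fun ⟨c, d, x, y, hρ⟩ => ?_⟩
    · obtain ⟨i, hi⟩ := PCG.exists_isRhoSubMax_of_isRhoN (by omega) hρ
      exact h i c x y hi
    · exact h d c x y (PCG.isRhoSubMax_of_isRhoN1 (by omega) hρ)

/-- An `(n+1)`-coloured graph `Γ`, `n ≥ 3`, is rigid (contains no
`ρ`-pairs) iff for every colour `i`, no `î`-residue of `Γ` contains a `ρ_{n-1}`-pair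
(i.e. a `ρ`-pair of maximal type of the `n`-coloured residue). -/
theorem stmt13 {n : ℕ} {V : Type} [Fintype V] (hn : 3 ≤ n) (Γ : PCG n V) :
    Γ.Rigid ↔ ∀ (i c : Fin (n + 1)) (x y : V), ¬Γ.IsRhoSubMax i c x y :=
  stmt13_general hn Γ
end

section
/- Let Γ be an (n+1)-coloured graph in which, for every colour i, all î-residues are bipartite, and let R = (e,f) be a ρ_{n−1}-pair involving colour c and not involving colour d. Then e and f lie in the same d̂-residue Ξ of Γ, and Ξ being bipartite determines a canonical switching of R (joining tail of e to head of f and head of e to tail of f with respect to the bipartition of Ξ). -/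
open Set

/-!
Because `n ≥ 2` there is a third colour `j ∉ {c, d}`, and the `{c, j}`-cycle through `e` and
`f` lies in the `d̂`-residue `Ξ`. Two proper 2-colourings of a connected graph either agree or
disagree everywhere, so whether `x` and `y` are in the same class of `Ξ` does not depend on the
bipartition chosen. The switching conjugates the involution of colour `c` by the transposition
of `x` with the endpoint `z` of `f` lying in the class of `x`; it joins `x` to the other
endpoint of `f`, which lies in the opposite class.
-/

namespace PCG

variable {n : ℕ} {V : Type}

def IsBipartition (Γ : PCG n V) (B : Set (Fin (n + 1))) (b : V → Bool) : Prop :=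
  ∀ j ∈ B, ∀ w, b (Γ.inv j w) ≠ b w

lemma inv_ne_of_ne_inv {Γ : PCG n V} {c : Fin (n + 1)} {u w : V} (h : u ≠ Γ.inv c w) :
    Γ.inv c u ≠ w :=
  fun hu => h ((Γ.involutive c).eq_iff.1 hu)

section Reach

variable {Γ : PCG n V} {B : Set (Fin (n + 1))} {b b' : V → Bool} {c : Fin (n + 1)} {u v : V}

lemma reach_mono_s18 {B' : Set (Fin (n + 1))} (hB : B ⊆ B') (h : Γ.reach B u v) :
    Γ.reach B' u v :=
  Relation.ReflTransGen.mono (r := Γ.step B) (fun _ _ ⟨j, hj, he⟩ => ⟨j, hB hj, he⟩) _ _ h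

lemma reach_inv_s18 (hc : c ∈ B) (h : Γ.reach B u v) : Γ.reach B u (Γ.inv c v) :=
  h.tail ⟨c, hc, rfl⟩

lemma IsBipartition.apply_inv (hb : Γ.IsBipartition B b) (hc : c ∈ B) (w : V) :
    b (Γ.inv c w) = !b w :=
  Bool.eq_not_of_ne (hb c hc w)

lemma IsBipartition.xor_eq_of_reach (hb : Γ.IsBipartition B b) (hb' : Γ.IsBipartition B b')
    (h : Γ.reach B u v) : xor (b v) (b' v) = xor (b u) (b' u) := by
  induction h with
  | refl => rfl
  | tail _ hs ih =>
    obtain ⟨j, hj, rfl⟩ := hs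
    rw [hb.apply_inv hj, hb'.apply_inv hj, Bool.not_xor_not, ih]

lemma IsBipartition.eq_iff_eq_of_reach (hb : Γ.IsBipartition B b)
    (hb' : Γ.IsBipartition B b') (h : Γ.reach B u v) : b v = b u ↔ b' v = b' u := by
  have := hb.xor_eq_of_reach hb' h
  revert this
  cases b u <;> cases b v <;> cases b' u <;> cases b' v <;> decide

lemma IsBipartition.exists_eq_or_eq_inv (hb : Γ.IsBipartition B b) (hc : c ∈ B) (x y : V) :
    ∃ z, (z = y ∨ z = Γ.inv c y) ∧ b z = b x := by
  by_cases h : b y = b x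
  · exact ⟨y, .inl rfl, h⟩
  · refine ⟨Γ.inv c y, .inr rfl, ?_⟩
    rw [hb.apply_inv hc]
    exact (Bool.eq_not_iff.2 (Ne.symm h)).symm

end Reach

lemma IsRhoN1.reach_compl {Γ : PCG n V} {c d : Fin (n + 1)} {x y : V} (hn : 2 ≤ n)
    (hR : Γ.IsRhoN1 c d x y) : Γ.reach {d}ᶜ x y := by
  obtain ⟨j, hjc, hjd⟩ := Fin.exists_ne_and_ne_of_two_lt c d (by omega)
  refine reach_mono_s18 ?_ (hR.2.2.2 j hjc hjd)
  rintro k (rfl | rfl)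
  exacts [hR.2.1.symm, hjd]

lemma EdgesNe.inv_right {Γ : PCG n V} {c : Fin (n + 1)} {x y : V} (h : Γ.EdgesNe c x y) :
    Γ.EdgesNe c x (Γ.inv c y) :=
  ⟨inv_ne_of_ne_inv h.2, fun hy => h.1 ((Γ.involutive c).injective hy)⟩

lemma IsSwitch.of_inv_right {Γ Γ' : PCG n V} {c : Fin (n + 1)} {x y : V}
    (h : Γ.IsSwitch Γ' c x (Γ.inv c y)) : Γ.IsSwitch Γ' c x y := by
  obtain ⟨hother, hfix, hjoin⟩ := h
  rw [Γ.involutive c y] at hfix hjoin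
  exact ⟨hother, fun v hx hy hx' hy' => hfix v hx hy' hx' hy, hjoin.symm⟩

section Switch

variable [DecidableEq V]

def switch (Γ : PCG n V) (c : Fin (n + 1)) (x z : V) : PCG n V where
  inv i := if i = c then Equiv.swap x z ∘ Γ.inv c ∘ Equiv.swap x z else Γ.inv i
  involutive i v := by
    split_ifs
    · simp [Γ.involutive c _]
    · exact Γ.involutive i v
  fixedfree i v := by
    split_ifs
    · simpa [Equiv.swap_apply_eq_iff] using Γ.fixedfree c (Equiv.swap x z v)
    · exact Γ.fixedfree i v

variable {Γ : PCG n V} {c : Fin (n + 1)} {x y z : V}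

lemma switch_inv_of_ne {i : Fin (n + 1)} (hi : i ≠ c) : (Γ.switch c x z).inv i = Γ.inv i :=
  if_neg hi

lemma switch_inv_self (v : V) :
    (Γ.switch c x z).inv c v = Equiv.swap x z (Γ.inv c (Equiv.swap x z v)) := by
  simp [switch]

lemma switch_inv_self_left (hz : z ≠ Γ.inv c x) : (Γ.switch c x z).inv c x = Γ.inv c z := by
  rw [switch_inv_self, Equiv.swap_apply_left,
    Equiv.swap_apply_of_ne_of_ne (inv_ne_of_ne_inv hz) (Γ.fixedfree c z)]

lemma isSwitch_switch (h : Γ.EdgesNe c x y) : Γ.IsSwitch (Γ.switch c x y) c x y := by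
  refine ⟨fun i hi => switch_inv_of_ne hi, fun v hx hy hx' hy' => ?_, .inr ⟨?_, ?_⟩⟩
  · rw [switch_inv_self, Equiv.swap_apply_of_ne_of_ne hx hy,
      Equiv.swap_apply_of_ne_of_ne (inv_ne_of_ne_inv hx') (inv_ne_of_ne_inv hy')]
  · exact switch_inv_self_left h.2
  · rw [switch_inv_self, Equiv.swap_apply_of_ne_of_ne (Γ.fixedfree c x) (Ne.symm h.2),
      Γ.involutive c x, Equiv.swap_apply_left]

lemma IsBipartition.switch_inv_self_left_ne {B : Set (Fin (n + 1))} {b : V → Bool}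
    (hb : Γ.IsBipartition B b) (hc : c ∈ B) (hz : z ≠ Γ.inv c x) (hzx : b z = b x) :
    b ((Γ.switch c x z).inv c x) ≠ b x := by
  rw [switch_inv_self_left hz, hb.apply_inv hc, hzx]
  exact Bool.not_ne_self _

end Switch

end PCG

theorem stmt18_general {n : ℕ} {V : Type} (hn : 2 ≤ n) (Γ : PCG n V)
    (hres : ∀ k : Fin (n + 1), ∃ b : V → Bool, ∀ j, j ≠ k → ∀ w, b (Γ.inv j w) ≠ b w)
    (c d : Fin (n + 1)) (x y : V) (hR : Γ.IsRhoN1 c d x y) :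
    Γ.reach {d}ᶜ x y ∧
    (∀ b b' : V → Bool, (∀ j, j ≠ d → ∀ w, b (Γ.inv j w) ≠ b w) →
      (∀ j, j ≠ d → ∀ w, b' (Γ.inv j w) ≠ b' w) → ((b y = b x) ↔ (b' y = b' x))) ∧
    ∃ Γ' : PCG n V, Γ.IsStdSwitchN1 Γ' c d x y := by
  classical
  have hreach := hR.reach_compl hn
  refine ⟨hreach, fun b b' hb hb' => PCG.IsBipartition.eq_iff_eq_of_reach hb hb' hreach, ?_⟩
  have hcd : c ∈ ({d}ᶜ : Set (Fin (n + 1))) := hR.2.1.symm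
  obtain ⟨b₀, hb₀ : Γ.IsBipartition {d}ᶜ b₀⟩ := hres d
  obtain ⟨z, hz, hzx⟩ := hb₀.exists_eq_or_eq_inv hcd x y
  obtain ⟨hswitch, hxz, hreach_z⟩ :
      Γ.IsSwitch (Γ.switch c x z) c x y ∧ Γ.EdgesNe c x z ∧ Γ.reach {d}ᶜ x z := by
    rcases hz with rfl | rfl
    · exact ⟨PCG.isSwitch_switch hR.1, hR.1, hreach⟩
    · exact ⟨(PCG.isSwitch_switch hR.1.inv_right).of_inv_right, hR.1.inv_right,
        PCG.reach_inv_s18 hcd hreach⟩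
  refine ⟨Γ.switch c x z, hswitch, fun b hb => ?_⟩
  exact PCG.IsBipartition.switch_inv_self_left_ne hb hcd hxz.2
    ((PCG.IsBipartition.eq_iff_eq_of_reach hb hb₀ hreach_z).2 hzx)

/-- Let `Γ` be an `(n+1)`-coloured graph all of whose residues are
bipartite, and let `R = (e,f)` be a `ρ_{n-1}`-pair involving colour `c` and not
involving colour `d`, with `e = {x, Γ.inv c x}` and `f = {y, Γ.inv c y}`.  Then `e` and
`f` lie in the same `d̂`-residue `Ξ` of `Γ`, and the bipartition of `Ξ` determines a
canonical switching of `R`: the relative classes of the endpoints with respect to any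
bipartition of the `d̂`-residues are well defined, and there is a switching joining the
tail of `e` to the head of `f` and the head of `e` to the tail of `f`. -/
theorem stmt18 {n : ℕ} {V : Type} [Fintype V] (hn : 2 ≤ n) (Γ : PCG n V)
    (hres : ∀ k : Fin (n + 1), ∃ b : V → Bool, ∀ j, j ≠ k → ∀ w, b (Γ.inv j w) ≠ b w)
    (c d : Fin (n + 1)) (x y : V) (hR : Γ.IsRhoN1 c d x y) :
    Γ.reach {d}ᶜ x y ∧
    (∀ b b' : V → Bool, (∀ j, j ≠ d → ∀ w, b (Γ.inv j w) ≠ b w) →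
      (∀ j, j ≠ d → ∀ w, b' (Γ.inv j w) ≠ b' w) → ((b y = b x) ↔ (b' y = b' x))) ∧
    ∃ Γ' : PCG n V, Γ.IsStdSwitchN1 Γ' c d x y :=
  stmt18_general hn Γ hres c d x y hR
end
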